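/- Let V be a finite-dimensional real inner product space of dimension at least 3, let e ∈ V be a unit vector, and let α, β, γ, δ be real numbers. For u ∈ V write u₀ = ⟨u,e⟩e and u₁ = u − u₀, and similarly w₀, w₁ for w ∈ V. Then the strict inequality α‖u₀‖²‖w₀‖² + β‖u₀‖²‖w₁‖² + γ‖u₁‖²‖w₀‖² + δ‖u₁‖²‖w₁‖² < 0 holds for all nonzero u, w ∈ V with ⟨u,w⟩ = 0 if and only if β < 0, γ < 0, δ < 0, and α + δ < 2√(βγ). -/

import Mathlib

/-!
Write `a₀ = ‖u₀‖²`, `a₁ = ‖u₁‖²`, `b₀ = ‖w₀‖²`, `b₁ = ‖w₁‖²`. Orthogonality of `u` and `w`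
gives `⟪u₁, w₁⟫ = -⟪u, e⟫⟪w, e⟫`, so Cauchy–Schwarz yields `a₀ b₀ ≤ a₁ b₁`. Under this
constraint AM-GM gives `β a₀ b₁ + γ a₁ b₀ ≤ -2√(βγ) a₀ b₀`, and `δ a₁ b₁ ≤ δ a₀ b₀`, so the
form is at most `(α + δ - 2√(βγ)) a₀ b₀`. Conversely, for orthonormal `f, g ⟂ e` the pair
`(f, g)` tests `δ`, and the rotated pairs `(x e + y f, -y e + x f)` test `β`, `γ` and, at
`x² = √(-γ)`, `y² = √(-β)` where AM-GM is an equality, `α + δ`.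
-/

open RealInnerProductSpace

def mtwForm (α β γ δ a₀ a₁ b₀ b₁ : ℝ) : ℝ :=
  α * a₀ * b₀ + β * a₀ * b₁ + γ * a₁ * b₀ + δ * a₁ * b₁

theorem two_mul_sqrt_mul_le {p q a₀ a₁ b₀ b₁ : ℝ} (hp : 0 ≤ p) (hq : 0 ≤ q)
    (ha₀ : 0 ≤ a₀) (ha₁ : 0 ≤ a₁) (hb₀ : 0 ≤ b₀) (hb₁ : 0 ≤ b₁) (hab : a₀ * b₀ ≤ a₁ * b₁) :
    2 * √(p * q) * (a₀ * b₀) ≤ p * (a₀ * b₁) + q * (a₁ * b₀) := by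
  have hsq : (2 * √(p * q) * (a₀ * b₀)) ^ 2 ≤ (p * (a₀ * b₁) + q * (a₁ * b₀)) ^ 2 :=
    calc (2 * √(p * q) * (a₀ * b₀)) ^ 2 = 4 * (p * q) * (a₀ * b₀) * (a₀ * b₀) := by
          rw [mul_pow, mul_pow, Real.sq_sqrt (by positivity)]; ring
      _ ≤ 4 * (p * q) * (a₀ * b₀) * (a₁ * b₁) := by gcongr
      _ = 4 * (p * (a₀ * b₁)) * (q * (a₁ * b₀)) := by ring
      _ ≤ (p * (a₀ * b₁) + q * (a₁ * b₀)) ^ 2 := four_mul_le_sq_add _ _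
  exact (abs_le_of_sq_le_sq hsq (by positivity)).trans' (le_abs_self _)

theorem mtwForm_neg {α β γ δ a₀ a₁ b₀ b₁ : ℝ} (hβ : β < 0) (hγ : γ < 0) (hδ : δ < 0)
    (hαδ : α + δ < 2 * √(β * γ)) (ha₀ : 0 ≤ a₀) (ha₁ : 0 ≤ a₁) (hb₀ : 0 ≤ b₀) (hb₁ : 0 ≤ b₁)
    (hpos : 0 < (a₀ + a₁) * (b₀ + b₁)) (hab : a₀ * b₀ ≤ a₁ * b₁) :
    mtwForm α β γ δ a₀ a₁ b₀ b₁ < 0 := by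
  unfold mtwForm
  rcases (mul_nonneg ha₀ hb₀).eq_or_lt with h0 | h0
  · -- here the form is at most `max β γ δ * (a₀ + a₁) * (b₀ + b₁)`
    have hα : α * a₀ * b₀ = 0 := by rw [mul_assoc, ← h0, mul_zero]
    have hm : max (max β γ) δ < 0 := max_lt (max_lt hβ hγ) hδ
    nlinarith [mul_le_mul_of_nonneg_right ((le_max_left β γ).trans (le_max_left _ δ))
        (mul_nonneg ha₀ hb₁),
      mul_le_mul_of_nonneg_right ((le_max_right β γ).trans (le_max_left _ δ))
        (mul_nonneg ha₁ hb₀),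
      mul_le_mul_of_nonneg_right (le_max_right (max β γ) δ) (mul_nonneg ha₁ hb₁),
      mul_neg_of_neg_of_pos hm hpos]
  · have hamgm := two_mul_sqrt_mul_le (neg_nonneg.2 hβ.le) (neg_nonneg.2 hγ.le)
      ha₀ ha₁ hb₀ hb₁ hab
    rw [neg_mul_neg] at hamgm
    nlinarith [mul_le_mul_of_nonpos_left hab hδ.le, mul_neg_of_neg_of_pos (sub_neg.2 hαδ) h0]

theorem lt_two_mul_sqrt_of_mtwForm_neg {α β γ δ : ℝ}
    (h : ∀ s t : ℝ, 0 ≤ s → 0 ≤ t → 0 < s + t → mtwForm α β γ δ s t t s < 0) :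
    β < 0 ∧ γ < 0 ∧ α + δ < 2 * √(β * γ) := by
  have hβ : β < 0 := by simpa [mtwForm] using h 1 0
  have hγ : γ < 0 := by simpa [mtwForm] using h 0 1
  refine ⟨hβ, hγ, ?_⟩
  have hs : 0 < √(β * γ) := Real.sqrt_pos.2 (mul_pos_of_neg_of_neg hβ hγ)
  have hmul : √(-γ) * √(-β) = √(β * γ) := by
    rw [← Real.sqrt_mul (neg_nonneg.2 hγ.le), neg_mul_neg, mul_comm]
  have key := h √(-γ) √(-β) (Real.sqrt_nonneg _) (Real.sqrt_nonneg _)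
    (add_pos_of_pos_of_nonneg (Real.sqrt_pos.2 (neg_pos.2 hγ)) (Real.sqrt_nonneg _))
  have hform : mtwForm α β γ δ √(-γ) √(-β) √(-β) √(-γ)
      = (α + δ) * (√(-γ) * √(-β)) + β * (√(-γ) * √(-γ)) + γ * (√(-β) * √(-β)) := by
    unfold mtwForm; ring
  rw [hform, hmul, Real.mul_self_sqrt (neg_nonneg.2 hβ.le),
    Real.mul_self_sqrt (neg_nonneg.2 hγ.le)] at key
  refine lt_of_mul_lt_mul_left (a := √(β * γ)) ?_ hs.le
  nlinarith [Real.mul_self_sqrt (mul_pos_of_neg_of_neg hβ hγ).le]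

section Projection

variable {V : Type*} [NormedAddCommGroup V] [InnerProductSpace ℝ V] {e : V}

theorem norm_smul_sq_of_norm_eq_one (he : ‖e‖ = 1) (x : ℝ) : ‖x • e‖ ^ 2 = x ^ 2 := by
  rw [norm_smul, he, mul_one, Real.norm_eq_abs, sq_abs]

theorem inner_proj_sub_proj (he : ‖e‖ = 1) (u w : V) :
    ⟪⟪u, e⟫ • e, w - ⟪w, e⟫ • e⟫ = 0 := by
  rw [real_inner_smul_left, inner_sub_right, real_inner_smul_right, real_inner_self_eq_norm_sq,
    he, real_inner_comm e w]
  ring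

theorem norm_sq_eq_norm_proj_sq_add (he : ‖e‖ = 1) (u : V) :
    ‖u‖ ^ 2 = ‖⟪u, e⟫ • e‖ ^ 2 + ‖u - ⟪u, e⟫ • e‖ ^ 2 := by
  simpa only [add_sub_cancel, ← sq] using
    norm_add_sq_eq_norm_sq_add_norm_sq_real (inner_proj_sub_proj he u u)

theorem norm_proj_sq_mul_le_of_inner_eq_zero (he : ‖e‖ = 1) {u w : V} (huw : ⟪u, w⟫ = 0) :
    ‖⟪u, e⟫ • e‖ ^ 2 * ‖⟪w, e⟫ • e‖ ^ 2 ≤ ‖u - ⟪u, e⟫ • e‖ ^ 2 * ‖w - ⟪w, e⟫ • e‖ ^ 2 := by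
  have hinner : ⟪u - ⟪u, e⟫ • e, w - ⟪w, e⟫ • e⟫ = -(⟪u, e⟫ * ⟪w, e⟫) := by
    rw [inner_sub_left, inner_proj_sub_proj he, inner_sub_right, huw, real_inner_smul_right,
      real_inner_comm e u]
    ring
  calc ‖⟪u, e⟫ • e‖ ^ 2 * ‖⟪w, e⟫ • e‖ ^ 2
      = ⟪u - ⟪u, e⟫ • e, w - ⟪w, e⟫ • e⟫ ^ 2 := by
        rw [hinner, norm_smul_sq_of_norm_eq_one he, norm_smul_sq_of_norm_eq_one he]; ring
    _ ≤ (‖u - ⟪u, e⟫ • e‖ * ‖w - ⟪w, e⟫ • e‖) ^ 2 := by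
        rw [← sq_abs]; gcongr; exact abs_real_inner_le_norm _ _
    _ = _ := mul_pow _ _ _

theorem inner_smul_add_smul_left (he : ‖e‖ = 1) (hfe : ⟪f, e⟫ = 0) (x y : ℝ) :
    ⟪x • e + y • f, e⟫ = x := by
  rw [inner_add_left, real_inner_smul_left, real_inner_smul_left, real_inner_self_eq_norm_sq,
    he, hfe]
  ring

theorem norm_proj_smul_add_smul_sq (he : ‖e‖ = 1) (hfe : ⟪f, e⟫ = 0) (x y : ℝ) :
    ‖⟪x • e + y • f, e⟫ • e‖ ^ 2 = x ^ 2 := by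
  rw [inner_smul_add_smul_left he hfe, norm_smul_sq_of_norm_eq_one he]

theorem norm_sub_proj_smul_add_smul_sq (he : ‖e‖ = 1) (hf : ‖f‖ = 1) (hfe : ⟪f, e⟫ = 0)
    (x y : ℝ) : ‖x • e + y • f - ⟪x • e + y • f, e⟫ • e‖ ^ 2 = y ^ 2 := by
  rw [inner_smul_add_smul_left he hfe, add_sub_cancel_left, norm_smul_sq_of_norm_eq_one hf]

theorem norm_proj_sq_add_pos (he : ‖e‖ = 1) {u : V} (hu : u ≠ 0) :
    0 < ‖⟪u, e⟫ • e‖ ^ 2 + ‖u - ⟪u, e⟫ • e‖ ^ 2 := by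
  rw [← norm_sq_eq_norm_proj_sq_add he]
  exact pow_pos (norm_pos_iff.2 hu) 2

variable {f : V}

theorem smul_add_smul_ne_zero (he : ‖e‖ = 1) (hf : ‖f‖ = 1) (hfe : ⟪f, e⟫ = 0) {x y : ℝ}
    (hxy : 0 < x ^ 2 + y ^ 2) : x • e + y • f ≠ 0 := by
  intro h0
  have hnorm := norm_sq_eq_norm_proj_sq_add he (x • e + y • f)
  rw [norm_proj_smul_add_smul_sq he hfe, norm_sub_proj_smul_add_smul_sq he hf hfe, h0,
    norm_zero] at hnorm
  linarith

theorem inner_rotation_eq_zero (he : ‖e‖ = 1) (hf : ‖f‖ = 1) (hfe : ⟪f, e⟫ = 0) (x y : ℝ) :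
    ⟪x • e + y • f, (-y) • e + x • f⟫ = 0 := by
  simp only [inner_add_left, inner_add_right, real_inner_smul_left, real_inner_smul_right,
    real_inner_self_eq_norm_sq, he, hf, hfe, (real_inner_comm f e).trans hfe]
  ring

end Projection

theorem exists_orthonormal_pair {W : Type*} [NormedAddCommGroup W] [InnerProductSpace ℝ W]
    [FiniteDimensional ℝ W] (h : 2 ≤ Module.finrank ℝ W) :
    ∃ f g : W, ‖f‖ = 1 ∧ ‖g‖ = 1 ∧ ⟪f, g⟫ = 0 := by
  have hon := (stdOrthonormalBasis ℝ W).orthonormal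
  exact ⟨_, _, hon.1 ⟨0, by omega⟩, hon.1 ⟨1, by omega⟩, hon.2 (by simp)⟩

theorem exists_orthonormal_pair_orthogonal {V : Type*} [NormedAddCommGroup V]
    [InnerProductSpace ℝ V] [FiniteDimensional ℝ V] (hdim : 3 ≤ Module.finrank ℝ V) (e : V) :
    ∃ f g : V, ‖f‖ = 1 ∧ ‖g‖ = 1 ∧ ⟪f, g⟫ = 0 ∧ ⟪f, e⟫ = 0 ∧ ⟪g, e⟫ = 0 := by
  have hrank : 2 ≤ Module.finrank ℝ (ℝ ∙ e)ᗮ := by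
    have hsum := Submodule.finrank_add_finrank_orthogonal (ℝ ∙ e)
    have hline := finrank_span_le_card (R := ℝ) ({e} : Set V)
    simp only [Set.toFinset_singleton, Finset.card_singleton] at hline
    omega
  obtain ⟨f, g, hf, hg, hfg⟩ := exists_orthonormal_pair hrank
  exact ⟨f, g, hf, hg, hfg, Submodule.mem_orthogonal_singleton_iff_inner_left.1 f.2,
    Submodule.mem_orthogonal_singleton_iff_inner_left.1 g.2⟩

/-- Higher-dimensional criterion for the strong Ma-Trudinger-Wang condition:
in dimension at least three, the strict quadratic-form inequality in the
projections onto a unit vector `e` holds for all nonzero orthogonal pairs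
`u, w` iff `β < 0`, `γ < 0`, `δ < 0` and `α + δ < 2√(βγ)`. -/
theorem stmt_3 {V : Type*} [NormedAddCommGroup V] [InnerProductSpace ℝ V]
    [FiniteDimensional ℝ V] (hdim : 3 ≤ Module.finrank ℝ V)
    (e : V) (he : ‖e‖ = 1) (α β γ δ : ℝ) :
    (∀ u w : V, u ≠ 0 → w ≠ 0 → ⟪u, w⟫ = 0 →
        α * ‖⟪u, e⟫ • e‖ ^ 2 * ‖⟪w, e⟫ • e‖ ^ 2 +
        β * ‖⟪u, e⟫ • e‖ ^ 2 * ‖w - ⟪w, e⟫ • e‖ ^ 2 +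
        γ * ‖u - ⟪u, e⟫ • e‖ ^ 2 * ‖⟪w, e⟫ • e‖ ^ 2 +
        δ * ‖u - ⟪u, e⟫ • e‖ ^ 2 * ‖w - ⟪w, e⟫ • e‖ ^ 2 < 0) ↔
      (β < 0 ∧ γ < 0 ∧ δ < 0 ∧ α + δ < 2 * Real.sqrt (β * γ)) := by
  change (∀ u w : V, u ≠ 0 → w ≠ 0 → ⟪u, w⟫ = 0 → mtwForm α β γ δ (‖⟪u, e⟫ • e‖ ^ 2)
    (‖u - ⟪u, e⟫ • e‖ ^ 2) (‖⟪w, e⟫ • e‖ ^ 2) (‖w - ⟪w, e⟫ • e‖ ^ 2) < 0) ↔ _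
  refine ⟨fun h => ?_, fun ⟨hβ, hγ, hδ, hαδ⟩ u w hu hw huw => ?_⟩
  · obtain ⟨f, g, hf, hg, hfg, hfe, hge⟩ := exists_orthonormal_pair_orthogonal hdim e
    have hδ : δ < 0 := by
      simpa [mtwForm, hf, hg, hfe, hge] using
        h f g (norm_ne_zero_iff.1 (by simp [hf])) (norm_ne_zero_iff.1 (by simp [hg])) hfg
    obtain ⟨hβ, hγ, hαδ⟩ := lt_two_mul_sqrt_of_mtwForm_neg fun s t hs ht hst => by
      have hrot := h (√s • e + √t • f) ((-√t) • e + √s • f)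
        (smul_add_smul_ne_zero he hf hfe (by simpa [hs, ht]))
        (smul_add_smul_ne_zero he hf hfe (by simpa [hs, ht, add_comm]))
        (inner_rotation_eq_zero he hf hfe _ _)
      rwa [norm_proj_smul_add_smul_sq he hfe, norm_sub_proj_smul_add_smul_sq he hf hfe,
        norm_proj_smul_add_smul_sq he hfe, norm_sub_proj_smul_add_smul_sq he hf hfe, neg_sq,
        Real.sq_sqrt hs, Real.sq_sqrt ht] at hrot
    exact ⟨hβ, hγ, hδ, hαδ⟩
  · exact mtwForm_neg hβ hγ hδ hαδ (by positivity) (by positivity) (by positivity)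
      (by positivity) (mul_pos (norm_proj_sq_add_pos he hu) (norm_proj_sq_add_pos he hw))
      (norm_proj_sq_mul_le_of_inner_eq_zero he huw)
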